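/- Object-hit upper bound via the fractional-knapsack value (inequality (17), Section 3.2). In the discrete-time caching model with variable-size objects, for each k and ω let Φ_k(ω) = sup{ ∑_i y_i·p_k(i)(ω) : y : Fin n → ℝ, 0 ≤ y_i ≤ 1 for all i, ∑_i s_i y_i ≤ B } be the fractional-knapsack value with profits p_k(i)(ω) and weights s_i. Then for every non-anticipative integral caching policy (C_k) — i.e., C_k : Ω → Finset (Fin n) is ℱ_{k-1}-measurable with ∑_{i ∈ C_k(ω)} s_i ≤ B for all ω — and every K ≥ 1, E[∑_{k=1}^K 1(R_k ∈ C_k)] ≤ E[∑_{k=1}^K Φ_k]; that is, the expected number of object hits of any non-anticipative policy is at most the expected cumulative HR-VC value. -/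

import Mathlib

/-! The hit indicator at step `k` splits as `∑ i ∈ C_k, 1(R_k = i)`. Each event `{i ∈ C_k}` is
`ℱ_{k-1}`-measurable, so on it `1(R_k = i)` integrates like its conditional expectation `p_k(i)`;
hence the expected hits at step `k` equal `E[∑ i ∈ C_k, p_k(i)]`. The indicator vector of `C_k` is
feasible for the fractional knapsack with profits `p_k`, so this is at most `E[Φ_k]`. Integrability
of `Φ_k` comes from the knapsack value being a continuous function of the profits (a supremum over
a compact set) dominated by `∑ i, |p_k(i)|`, where each `p_k(i)` is integrable as a version of a
conditional expectation. -/

open MeasureTheory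

section FractionalKnapsack

variable {ι : Type*} [Fintype ι]

def fracKnapsackSet (s : ι → ℝ) (B : ℝ) : Set (ι → ℝ) :=
  {y | (∀ i, 0 ≤ y i ∧ y i ≤ 1) ∧ ∑ i, s i * y i ≤ B}

noncomputable def fracKnapsackValue (s : ι → ℝ) (B : ℝ) (q : ι → ℝ) : ℝ :=
  sSup ((fun y : ι → ℝ => ∑ i, y i * q i) '' fracKnapsackSet s B)

theorem fracKnapsackSet_eq_Icc_inter (s : ι → ℝ) (B : ℝ) :
    fracKnapsackSet s B = Set.Icc 0 1 ∩ {y | ∑ i, s i * y i ≤ B} := by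
  ext y
  simp [fracKnapsackSet, Pi.le_def, forall_and]

theorem isCompact_fracKnapsackSet (s : ι → ℝ) (B : ℝ) : IsCompact (fracKnapsackSet s B) := by
  rw [fracKnapsackSet_eq_Icc_inter]
  exact isCompact_Icc.inter_right (isClosed_le (by fun_prop) continuous_const)

theorem continuous_fracKnapsackValue (s : ι → ℝ) (B : ℝ) :
    Continuous (fracKnapsackValue s B) :=
  (isCompact_fracKnapsackSet s B).continuous_sSup
    (f := fun (q y : ι → ℝ) => ∑ i, y i * q i) (by fun_prop)

theorem abs_fracKnapsackValue_le (s : ι → ℝ) (B : ℝ) (q : ι → ℝ) :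
    |fracKnapsackValue s B q| ≤ ∑ i, |q i| := by
  set M := ∑ i, |q i|
  have hvalue : ∀ y ∈ fracKnapsackSet s B, |∑ i, y i * q i| ≤ M := fun y hy =>
    (Finset.abs_sum_le_sum_abs _ _).trans <| Finset.sum_le_sum fun i _ => by
      rw [abs_mul]
      exact mul_le_of_le_one_left (abs_nonneg _) (abs_le.2 ⟨by linarith [(hy.1 i).1], (hy.1 i).2⟩)
  have hM : 0 ≤ M := Finset.sum_nonneg fun i _ => abs_nonneg (q i)
  refine abs_le.2 ⟨?_, Real.sSup_le ?_ hM⟩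
  · rcases (fracKnapsackSet s B).eq_empty_or_nonempty with hD | ⟨y, hy⟩
    · simp [fracKnapsackValue, hD, hM]
    refine (neg_le_of_abs_le (hvalue y hy)).trans (le_csSup ⟨M, ?_⟩ ⟨y, hy, rfl⟩)
    rintro _ ⟨z, hz, rfl⟩
    exact le_of_abs_le (hvalue z hz)
  · rintro _ ⟨y, hy, rfl⟩
    exact le_of_abs_le (hvalue y hy)

theorem sum_le_fracKnapsackValue {s : ι → ℝ} {B : ℝ} (q : ι → ℝ) {S : Finset ι}
    (hS : ∑ i ∈ S, s i ≤ B) : ∑ i ∈ S, q i ≤ fracKnapsackValue s B q := by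
  classical
  have hbdd : BddAbove ((fun y : ι → ℝ => ∑ i, y i * q i) '' fracKnapsackSet s B) :=
    (isCompact_fracKnapsackSet s B).bddAbove_image (by fun_prop)
  refine le_csSup hbdd ⟨fun i => if i ∈ S then 1 else 0, ⟨fun i => ?_, ?_⟩, ?_⟩
  · by_cases hi : i ∈ S <;> simp [hi]
  · simpa [mul_ite, Finset.sum_ite_mem] using hS
  · simp [ite_mul, Finset.sum_ite_mem]

theorem integrable_fracKnapsackValue {Ω : Type*} [MeasurableSpace Ω] {μ : Measure Ω}
    (s : ι → ℝ) (B : ℝ) {q : Ω → ι → ℝ} (hq : ∀ i, Integrable (q · i) μ) :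
    Integrable (fun ω => fracKnapsackValue s B (q ω)) μ :=
  (integrable_finsetSum _ fun i _ => (hq i).abs).mono'
    ((continuous_fracKnapsackValue s B).comp_aestronglyMeasurable
      (aemeasurable_pi_lambda q fun i => (hq i).aemeasurable).aestronglyMeasurable)
    (ae_of_all _ fun ω => abs_fracKnapsackValue_le s B (q ω))

end FractionalKnapsack

section ConditionalHitProbability

variable {Ω ι : Type*} [DecidableEq ι] {m m₀ : MeasurableSpace Ω} {μ : Measure Ω}
  {C : Ω → Finset ι}

theorem setIntegral_eq_of_condExp_ae_eq (hm : m ≤ m₀) [SigmaFinite (μ.trim hm)] {f g : Ω → ℝ}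
    (hf : Integrable f μ) (hfg : μ[f | m] =ᵐ[μ] g) {s : Set Ω} (hs : MeasurableSet[m] s) :
    ∫ x in s, g x ∂μ = ∫ x in s, f x ∂μ :=
  (setIntegral_congr_ae (hm s hs) (hfg.mono fun _ hx _ => hx)).symm.trans
    (setIntegral_condExp hm hf hs)

theorem ite_mem_eq_sum_mem (X : Ω → ι) (C : Ω → Finset ι) (ω : Ω) :
    (if X ω ∈ C ω then (1 : ℝ) else 0) = ∑ i ∈ C ω, if X ω = i then (1 : ℝ) else 0 := by
  rw [Finset.sum_ite_eq]

theorem integrable_ite_eq [MeasurableSpace ι] [MeasurableSingletonClass ι] [IsFiniteMeasure μ]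
    {X : Ω → ι} (hX : Measurable X) (i : ι) :
    Integrable (fun ω => if X ω = i then (1 : ℝ) else 0) μ :=
  Integrable.of_bound (measurable_const.ite (hX (measurableSet_singleton i))
    measurable_const).aestronglyMeasurable 1 (ae_of_all _ fun ω => by split_ifs <;> simp)

variable [Fintype ι]

theorem sum_mem_eq_sum_indicator (C : Ω → Finset ι) (f : Ω → ι → ℝ) (ω : Ω) :
    ∑ i ∈ C ω, f ω i = ∑ i, {ω | i ∈ C ω}.indicator (f · i) ω := by
  simp [Set.indicator_apply, Finset.sum_ite_mem]

theorem integrable_sum_mem {f : Ω → ι → ℝ} (hf : ∀ i, Integrable (f · i) μ)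
    (hC : ∀ i, MeasurableSet {ω | i ∈ C ω}) : Integrable (fun ω => ∑ i ∈ C ω, f ω i) μ := by
  simp_rw [sum_mem_eq_sum_indicator C f]
  exact integrable_finsetSum _ fun i _ => (hf i).indicator (hC i)

theorem integral_sum_mem {f : Ω → ι → ℝ} (hf : ∀ i, Integrable (f · i) μ)
    (hC : ∀ i, MeasurableSet {ω | i ∈ C ω}) :
    ∫ ω, ∑ i ∈ C ω, f ω i ∂μ = ∑ i, ∫ ω in {ω | i ∈ C ω}, f ω i ∂μ := by
  simp_rw [sum_mem_eq_sum_indicator C f]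
  rw [integral_finsetSum _ fun i _ => (hf i).indicator (hC i)]
  exact Finset.sum_congr rfl fun i _ => integral_indicator (hC i)

variable [MeasurableSpace ι] [MeasurableSingletonClass ι] [IsFiniteMeasure μ] {X : Ω → ι}

theorem integrable_ite_mem (hX : Measurable X) (hC : ∀ i, MeasurableSet {ω | i ∈ C ω}) :
    Integrable (fun ω => if X ω ∈ C ω then (1 : ℝ) else 0) μ := by
  simp_rw [ite_mem_eq_sum_mem X C]
  exact integrable_sum_mem (integrable_ite_eq hX) hC

theorem integral_ite_mem_eq_integral_sum_condProb (hm : m ≤ m₀) (hX : Measurable X)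
    {q : Ω → ι → ℝ} (hq : ∀ i, μ[(fun ω => if X ω = i then (1 : ℝ) else 0) | m] =ᵐ[μ] (q · i))
    (hC : ∀ i, MeasurableSet[m] {ω | i ∈ C ω}) :
    ∫ ω, (if X ω ∈ C ω then (1 : ℝ) else 0) ∂μ = ∫ ω, ∑ i ∈ C ω, q ω i ∂μ := by
  have hC₀ : ∀ i, MeasurableSet {ω | i ∈ C ω} := fun i => hm _ (hC i)
  simp_rw [ite_mem_eq_sum_mem X C]
  rw [integral_sum_mem (integrable_ite_eq hX) hC₀,
    integral_sum_mem (fun i => integrable_condExp.congr (hq i)) hC₀]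
  exact Finset.sum_congr rfl fun i _ =>
    (setIntegral_eq_of_condExp_ae_eq hm (integrable_ite_eq hX i) (hq i) (hC i)).symm

theorem integral_ite_mem_le_integral_fracKnapsackValue (hm : m ≤ m₀) (hX : Measurable X)
    {q : Ω → ι → ℝ} (hq : ∀ i, μ[(fun ω => if X ω = i then (1 : ℝ) else 0) | m] =ᵐ[μ] (q · i))
    (hC : ∀ i, MeasurableSet[m] {ω | i ∈ C ω}) {s : ι → ℝ} {B : ℝ}
    (hC_cap : ∀ ω, ∑ i ∈ C ω, s i ≤ B) :
    ∫ ω, (if X ω ∈ C ω then (1 : ℝ) else 0) ∂μ ≤ ∫ ω, fracKnapsackValue s B (q ω) ∂μ := by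
  have hq_int : ∀ i, Integrable (q · i) μ := fun i => integrable_condExp.congr (hq i)
  rw [integral_ite_mem_eq_integral_sum_condProb hm hX hq hC]
  exact integral_mono (integrable_sum_mem hq_int fun i => hm _ (hC i))
    (integrable_fracKnapsackValue s B hq_int) fun ω => sum_le_fracKnapsackValue (q ω) (hC_cap ω)

end ConditionalHitProbability

theorem hr_vc_expected_hits_upper_bound_general
    {Ω : Type*} {𝒜 : MeasurableSpace Ω} (μ : Measure Ω) [IsProbabilityMeasure μ]
    (ℱ : ℕ → MeasurableSpace Ω) (hℱ_le : ∀ k, ℱ k ≤ 𝒜)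
    -- objects, sizes and cache capacity in bytes
    (n : ℕ) (s : Fin n → ℝ) (B : ℝ)
    -- the request process
    (R : ℕ → Ω → Fin n) (hR : ∀ k, Measurable[ℱ k] (R k))
    -- the conditional request probabilities (normalized hazard rates)
    (p : ℕ → Ω → Fin n → ℝ)
    (hp_cond : ∀ k, 1 ≤ k → ∀ i : Fin n,
      μ[(fun ω => if R k ω = i then (1 : ℝ) else 0) | ℱ (k - 1)]
        =ᵐ[μ] fun ω => p k ω i)
    -- the fractional-knapsack value with profits `p k ω i` and weights `s i`
    (Φ : ℕ → Ω → ℝ)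
    (hΦ : ∀ k ω, Φ k ω = sSup ((fun y : Fin n → ℝ => ∑ i, y i * p k ω i) ''
      {y | (∀ i, 0 ≤ y i ∧ y i ≤ 1) ∧ ∑ i, s i * y i ≤ B}))
    -- an arbitrary non-anticipative integral caching policy
    (C : ℕ → Ω → Finset (Fin n))
    (hC_meas : ∀ k, 1 ≤ k → ∀ i : Fin n, MeasurableSet[ℱ (k - 1)] {ω | i ∈ C k ω})
    (hC_cap : ∀ k ω, ∑ i ∈ C k ω, s i ≤ B)
    (K : ℕ) :
    ∫ ω, (∑ k ∈ Finset.Icc 1 K, if R k ω ∈ C k ω then (1 : ℝ) else 0) ∂μ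
      ≤ ∫ ω, (∑ k ∈ Finset.Icc 1 K, Φ k ω) ∂μ := by
  have hk_pos : ∀ k ∈ Finset.Icc 1 K, 1 ≤ k := fun k hk => (Finset.mem_Icc.1 hk).1
  have hΦ_eq : ∀ k, Φ k = fun ω => fracKnapsackValue s B (p k ω) := fun k => funext (hΦ k)
  have hR_meas : ∀ k, Measurable (R k) := fun k => (hR k).mono (hℱ_le k) le_rfl
  have hp_int : ∀ k, 1 ≤ k → ∀ i, Integrable (p k · i) μ := fun k hk i =>
    integrable_condExp.congr (hp_cond k hk i)
  rw [integral_finsetSum _ fun k hk => integrable_ite_mem (hR_meas k)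
      fun i => hℱ_le _ _ (hC_meas k (hk_pos k hk) i),
    integral_finsetSum _ fun k hk => hΦ_eq k ▸
      integrable_fracKnapsackValue s B (hp_int k (hk_pos k hk))]
  refine Finset.sum_le_sum fun k hk => ?_
  rw [hΦ_eq k]
  exact integral_ite_mem_le_integral_fracKnapsackValue (hℱ_le _) (hR_meas k)
    (hp_cond k (hk_pos k hk)) (hC_meas k (hk_pos k hk)) (hC_cap k)

/-- Object-hit upper bound via the fractional-knapsack value (inequality (17), Section 3.2):
for any non-anticipative integral caching policy, the expected number of object hits in the
first `K` requests is at most the expected cumulative fractional-knapsack value `Φ_k`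
(the per-request conditional hit probability of the HR-VC rule). -/
theorem hr_vc_expected_hits_upper_bound
    {Ω : Type*} {𝒜 : MeasurableSpace Ω} (μ : Measure Ω) [IsProbabilityMeasure μ]
    (ℱ : ℕ → MeasurableSpace Ω) (hℱ_le : ∀ k, ℱ k ≤ 𝒜) (hℱ_mono : Monotone ℱ)
    -- objects, sizes and cache capacity in bytes
    (n : ℕ) (s : Fin n → ℝ) (hs : ∀ i, 0 < s i) (B : ℝ) (hB : 0 < B)
    -- the request process
    (R : ℕ → Ω → Fin n) (hR : ∀ k, Measurable[ℱ k] (R k))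
    -- the conditional request probabilities (normalized hazard rates)
    (p : ℕ → Ω → Fin n → ℝ)
    (hp_meas : ∀ k, 1 ≤ k → Measurable[ℱ (k - 1)] (p k))
    (hp_nonneg : ∀ k ω i, 0 ≤ p k ω i)
    (hp_sum : ∀ k ω, ∑ i, p k ω i = 1)
    (hp_cond : ∀ k, 1 ≤ k → ∀ i : Fin n,
      μ[(fun ω => if R k ω = i then (1 : ℝ) else 0) | ℱ (k - 1)]
        =ᵐ[μ] fun ω => p k ω i)
    -- the fractional-knapsack value with profits `p k ω i` and weights `s i`
    (Φ : ℕ → Ω → ℝ)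
    (hΦ : ∀ k ω, Φ k ω = sSup ((fun y : Fin n → ℝ => ∑ i, y i * p k ω i) ''
      {y | (∀ i, 0 ≤ y i ∧ y i ≤ 1) ∧ ∑ i, s i * y i ≤ B}))
    -- an arbitrary non-anticipative integral caching policy
    (C : ℕ → Ω → Finset (Fin n))
    (hC_meas : ∀ k, 1 ≤ k → ∀ i : Fin n, MeasurableSet[ℱ (k - 1)] {ω | i ∈ C k ω})
    (hC_cap : ∀ k ω, ∑ i ∈ C k ω, s i ≤ B)
    (K : ℕ) (hK : 1 ≤ K) :
    ∫ ω, (∑ k ∈ Finset.Icc 1 K, if R k ω ∈ C k ω then (1 : ℝ) else 0) ∂μ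
      ≤ ∫ ω, (∑ k ∈ Finset.Icc 1 K, Φ k ω) ∂μ :=
  hr_vc_expected_hits_upper_bound_general μ ℱ hℱ_le n s B R hR p hp_cond Φ hΦ C hC_meas hC_cap K
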